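/- arXiv:1409.5862 — 5 statements merged into one kernel-verified Lean document; each statement's English description precedes it below -/
import Mathlib

section
/- Let 1 < p < ∞ and ω : [0,1] → [0,∞) be measurable with A := ∫₀¹ t^{-n/p} ω(t) dt < ∞. Then for every f ∈ L^p(ℝⁿ), the weighted Hardy operator H_ω f(x) = ∫₀¹ f(tx) ω(t) dt satisfies ‖H_ω f‖_{L^p(ℝⁿ)} ≤ A · ‖f‖_{L^p(ℝⁿ)}. -/
/-!
Write `ω(t) |f(tx)| = (t^{-n/p} ω(t)) · (t^{n/p} |f(tx)|)` and apply Hölder's inequality against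
the weight `t^{-n/p} ω(t) dt`, of total mass `A`:
`|H_ω f(x)|^p ≤ A^{p-1} ∫₀¹ t^{-n/p} ω(t) t^n |f(tx)|^p dt`.
Integrating in `x`, Tonelli and the substitution `y = tx`, whose Jacobian `t^{-n}` cancels `t^n`,
give `‖H_ω f‖_p^p ≤ A^p ‖f‖_p^p`.
-/

open MeasureTheory Set Module
open scoped ENNReal

namespace ENNReal

variable {α : Type*} [MeasurableSpace α] {μ : Measure α}

theorem rpow_lintegral_mul_le {p : ℝ} (hp : 1 ≤ p) {w h : α → ℝ≥0∞}
    (hw : AEMeasurable w μ) (hh : AEMeasurable h μ) :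
    (∫⁻ a, w a * h a ∂μ) ^ p ≤ (∫⁻ a, w a ∂μ) ^ (p - 1) * ∫⁻ a, w a * h a ^ p ∂μ := by
  have hp0 : 0 < p := one_pos.trans_le hp
  have hq0 : 0 ≤ 1 - p⁻¹ := sub_nonneg.2 (inv_le_one_of_one_le₀ hp)
  have hsplit : ∀ a, w a * h a = w a ^ (1 - p⁻¹) * (w a * h a ^ p) ^ p⁻¹ := fun a => by
    rw [mul_rpow_of_nonneg _ _ (inv_nonneg.2 hp0.le), ← rpow_mul, mul_inv_cancel₀ hp0.ne',
      rpow_one, ← mul_assoc, ← rpow_add_of_nonneg _ _ hq0 (inv_nonneg.2 hp0.le), sub_add_cancel,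
      rpow_one]
  calc (∫⁻ a, w a * h a ∂μ) ^ p
      ≤ ((∫⁻ a, w a ∂μ) ^ (1 - p⁻¹) * (∫⁻ a, w a * h a ^ p ∂μ) ^ p⁻¹) ^ p := by
        gcongr
        simp_rw [hsplit]
        exact lintegral_mul_norm_pow_le hw (hw.mul (hh.pow_const p)) hq0 (inv_nonneg.2 hp0.le)
          (sub_add_cancel 1 p⁻¹)
    _ = (∫⁻ a, w a ∂μ) ^ (p - 1) * ∫⁻ a, w a * h a ^ p ∂μ := by
        rw [mul_rpow_of_nonneg _ _ hp0.le, ← rpow_mul, ← rpow_mul, inv_mul_cancel₀ hp0.ne',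
          rpow_one, sub_mul, one_mul, inv_mul_cancel₀ hp0.ne']

end ENNReal

section Scaling

variable {E : Type*} [NormedAddCommGroup E] [NormedSpace ℝ E] [MeasurableSpace E] [BorelSpace E]
  [FiniteDimensional ℝ E] (μ : Measure E) [μ.IsAddHaarMeasure]

theorem lintegral_comp_smul_of_pos {t : ℝ} (ht : 0 < t) {G : E → ℝ≥0∞} (hG : Measurable G) :
    ∫⁻ x, G (t • x) ∂μ = ENNReal.ofReal (t ^ finrank ℝ E)⁻¹ * ∫⁻ x, G x ∂μ := by
  rw [← lintegral_map hG (measurable_const_smul t), Measure.map_addHaar_smul μ ht.ne',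
    lintegral_smul_measure, smul_eq_mul, abs_of_pos (by positivity)]

theorem quasiMeasurePreserving_smul_prod :
    Measure.QuasiMeasurePreserving (fun z : E × ℝ => z.2 • z.1) (μ.prod volume) μ := by
  have hm : Measurable fun z : E × ℝ => z.2 • z.1 := measurable_snd.smul measurable_fst
  refine ⟨hm, Measure.AbsolutelyContinuous.mk fun s hs hμs => ?_⟩
  rw [Measure.map_apply hm hs, Measure.prod_apply_symm (hm hs)]
  refine (lintegral_congr_ae ?_).trans lintegral_zero
  filter_upwards [Measure.ae_ne volume 0] with t ht
  change μ ((t • ·) ⁻¹' s) = 0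
  rw [Measure.addHaar_preimage_smul μ ht, hμs, mul_zero]

theorem lintegral_lintegral_smul_eq {s : Set ℝ} (hs : MeasurableSet s) (hs0 : s ⊆ Ioi 0)
    {w : ℝ → ℝ≥0∞} (hw : Measurable w) {G : E → ℝ≥0∞} (hG : Measurable G) :
    ∫⁻ x, (∫⁻ t in s, w t * (ENNReal.ofReal (t ^ finrank ℝ E) * G (t • x))) ∂μ
      = (∫⁻ t in s, w t) * ∫⁻ x, G x ∂μ := by
  rw [lintegral_lintegral_swap (by fun_prop), ← lintegral_mul_const _ hw]
  refine setLIntegral_congr_fun hs fun t ht => ?_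
  have ht : 0 < t := hs0 ht
  rw [lintegral_const_mul _ (by fun_prop), lintegral_const_mul _ (by fun_prop),
    lintegral_comp_smul_of_pos μ ht hG, ← mul_assoc (ENNReal.ofReal _),
    ← ENNReal.ofReal_mul (by positivity), mul_inv_cancel₀ (by positivity), ENNReal.ofReal_one,
    one_mul]

end Scaling

section WeightedHardy

variable {E F : Type*} [NormedAddCommGroup E] [NormedSpace ℝ E]
  [NormedAddCommGroup F] [NormedSpace ℝ F]

noncomputable def weightedHardy (ω : ℝ → ℝ) (f : E → F) (x : E) : F :=
  ∫ t in Ioo (0:ℝ) 1, ω t • f (t • x)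

theorem weightedHardy_congr_ae [MeasurableSpace E] [BorelSpace E] [FiniteDimensional ℝ E]
    (μ : Measure E) [μ.IsAddHaarMeasure] {f g : E → F} (hfg : f =ᵐ[μ] g) (ω : ℝ → ℝ) :
    weightedHardy ω f =ᵐ[μ] weightedHardy ω g := by
  filter_upwards [Measure.ae_ae_of_ae_prod ((quasiMeasurePreserving_smul_prod μ).ae_eq_comp hfg)]
    with x hx
  exact integral_congr_ae (ae_restrict_of_ae (hx.mono fun t ht => congrArg (ω t • ·) ht))

variable [MeasurableSpace E] [BorelSpace E] [MeasurableSpace F] [BorelSpace F]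
  {ω : ℝ → ℝ} (hωm : Measurable ω) (hω : ∀ t ∈ Ioo (0:ℝ) 1, 0 ≤ ω t)
  {p : ℝ} (hp : 1 ≤ p) {g : E → F} (hg : Measurable g)
include hωm hω hp hg

theorem enorm_weightedHardy_rpow_le (d : ℕ) (x : E) :
    ‖weightedHardy ω g x‖ₑ ^ p
      ≤ (∫⁻ t in Ioo (0:ℝ) 1, ENNReal.ofReal (t ^ (-(d:ℝ)/p) * ω t)) ^ (p - 1) *
        ∫⁻ t in Ioo (0:ℝ) 1, ENNReal.ofReal (t ^ (-(d:ℝ)/p) * ω t) *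
          (ENNReal.ofReal (t ^ d) * ‖g (t • x)‖ₑ ^ p) := by
  have hp0 : 0 < p := one_pos.trans_le hp
  set w : ℝ → ℝ≥0∞ := fun t => ENNReal.ofReal (t ^ (-(d:ℝ)/p) * ω t)
  set h : ℝ → ℝ≥0∞ := fun t => ENNReal.ofReal (t ^ ((d:ℝ)/p)) * ‖g (t • x)‖ₑ
  have hw_nonneg : ∀ t ∈ Ioo (0:ℝ) 1, 0 ≤ t ^ (-(d:ℝ)/p) * ω t := fun t ht =>
    mul_nonneg (Real.rpow_nonneg ht.1.le _) (hω t ht)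
  have hwh : ∀ t ∈ Ioo (0:ℝ) 1, ‖ω t • g (t • x)‖ₑ = w t * h t := fun t ht => by
    rw [enorm_smul, Real.enorm_eq_ofReal (hω t ht), ← mul_assoc,
      ← ENNReal.ofReal_mul (hw_nonneg t ht), mul_right_comm, ← Real.rpow_add ht.1, neg_div,
      neg_add_cancel, Real.rpow_zero, one_mul]
  have hhp : ∀ t ∈ Ioo (0:ℝ) 1, h t ^ p = ENNReal.ofReal (t ^ d) * ‖g (t • x)‖ₑ ^ p :=
    fun t ht => by
      rw [ENNReal.mul_rpow_of_nonneg _ _ hp0.le, ENNReal.ofReal_rpow_of_nonneg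
        (Real.rpow_nonneg ht.1.le _) hp0.le, ← Real.rpow_mul ht.1.le, div_mul_cancel₀ _ hp0.ne',
        Real.rpow_natCast]
  calc ‖weightedHardy ω g x‖ₑ ^ p ≤ (∫⁻ t in Ioo (0:ℝ) 1, w t * h t) ^ p := by
        gcongr
        exact (enorm_integral_le_lintegral_enorm _).trans_eq
          (setLIntegral_congr_fun measurableSet_Ioo hwh)
    _ ≤ (∫⁻ t in Ioo (0:ℝ) 1, w t) ^ (p - 1) * ∫⁻ t in Ioo (0:ℝ) 1, w t * h t ^ p :=
        ENNReal.rpow_lintegral_mul_le hp (by fun_prop) (by fun_prop)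
    _ = _ := by
        congr 1
        exact setLIntegral_congr_fun measurableSet_Ioo fun t ht => by rw [hhp t ht]

theorem eLpNorm_weightedHardy_le [FiniteDimensional ℝ E] (μ : Measure E) [μ.IsAddHaarMeasure] :
    eLpNorm (weightedHardy ω g) (ENNReal.ofReal p) μ
      ≤ (∫⁻ t in Ioo (0:ℝ) 1, ENNReal.ofReal (t ^ (-(finrank ℝ E : ℝ)/p) * ω t)) *
        eLpNorm g (ENNReal.ofReal p) μ := by
  have hp0 : 0 < p := one_pos.trans_le hp
  set A := ∫⁻ t in Ioo (0:ℝ) 1, ENNReal.ofReal (t ^ (-(finrank ℝ E : ℝ)/p) * ω t)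
  have hInt : ∫⁻ x, ‖weightedHardy ω g x‖ₑ ^ p ∂μ ≤ A ^ p * ∫⁻ x, ‖g x‖ₑ ^ p ∂μ :=
    calc ∫⁻ x, ‖weightedHardy ω g x‖ₑ ^ p ∂μ
        ≤ ∫⁻ x, A ^ (p - 1) * (∫⁻ t in Ioo (0:ℝ) 1,
            ENNReal.ofReal (t ^ (-(finrank ℝ E : ℝ)/p) * ω t) *
              (ENNReal.ofReal (t ^ finrank ℝ E) * ‖g (t • x)‖ₑ ^ p)) ∂μ :=
          lintegral_mono fun x => enorm_weightedHardy_rpow_le hωm hω hp hg _ x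
      _ = A ^ (p - 1) * (A * ∫⁻ x, ‖g x‖ₑ ^ p ∂μ) := by
          rw [lintegral_const_mul _ (by fun_prop),
            lintegral_lintegral_smul_eq μ measurableSet_Ioo (fun t ht => ht.1)
              (G := fun y => ‖g y‖ₑ ^ p) (by fun_prop) (by fun_prop)]
      _ = A ^ p * ∫⁻ x, ‖g x‖ₑ ^ p ∂μ := by
          have hAp : A ^ (p - 1) * A = A ^ p := by
            simpa using (ENNReal.rpow_add_of_nonneg (x := A) _ _ (sub_nonneg.2 hp) zero_le_one).symm
          rw [← mul_assoc, hAp]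
  rw [eLpNorm_eq_lintegral_rpow_enorm_toReal (ENNReal.ofReal_ne_zero_iff.2 hp0)
      ENNReal.ofReal_ne_top, eLpNorm_eq_lintegral_rpow_enorm_toReal
      (ENNReal.ofReal_ne_zero_iff.2 hp0) ENNReal.ofReal_ne_top, ENNReal.toReal_ofReal hp0.le]
  calc (∫⁻ x, ‖weightedHardy ω g x‖ₑ ^ p ∂μ) ^ (1 / p)
      ≤ (A ^ p * ∫⁻ x, ‖g x‖ₑ ^ p ∂μ) ^ (1 / p) := by gcongr
    _ = A * (∫⁻ x, ‖g x‖ₑ ^ p ∂μ) ^ (1 / p) := by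
        rw [ENNReal.mul_rpow_of_nonneg _ _ (by positivity), ← ENNReal.rpow_mul,
          mul_one_div_cancel hp0.ne', ENNReal.rpow_one]

end WeightedHardy

/-- Sufficiency part of Theorem A: if `A = ∫₀¹ t^{-n/p} ω(t) dt < ∞`, then the weighted
Hardy operator `H_ω f (x) = ∫₀¹ f(tx) ω(t) dt` is bounded on `L^p(ℝⁿ)` with norm `≤ A`. -/
theorem weighted_hardy_Lp_bound (n : ℕ) (p : ℝ) (hp : 1 < p) (ω : ℝ → ℝ)
    (hωm : Measurable ω) (hωnn : ∀ t ∈ Icc (0:ℝ) 1, 0 ≤ ω t)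
    (hA : IntegrableOn (fun t => t ^ (-(n:ℝ)/p) * ω t) (Ioo 0 1))
    (f : EuclideanSpace ℝ (Fin n) → ℂ) (hf : MemLp f (ENNReal.ofReal p) volume) :
    eLpNorm (fun x => ∫ t in Ioo (0:ℝ) 1, ω t • f (t • x)) (ENNReal.ofReal p) volume
      ≤ ENNReal.ofReal (∫ t in Ioo (0:ℝ) 1, t ^ (-(n:ℝ)/p) * ω t) *
        eLpNorm f (ENNReal.ofReal p) volume := by
  have hω : ∀ t ∈ Ioo (0:ℝ) 1, 0 ≤ ω t := fun t ht => hωnn t (Ioo_subset_Icc_self ht)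
  have hA_lintegral : ENNReal.ofReal (∫ t in Ioo (0:ℝ) 1, t ^ (-(n:ℝ)/p) * ω t)
      = ∫⁻ t in Ioo (0:ℝ) 1, ENNReal.ofReal (t ^ (-(n:ℝ)/p) * ω t) :=
    ofReal_integral_eq_lintegral_ofReal hA <| (ae_restrict_mem measurableSet_Ioo).mono
      fun t ht => mul_nonneg (Real.rpow_nonneg ht.1.le _) (hω t ht)
  obtain ⟨g, hgm, hfg⟩ := hf.1
  have hbound := eLpNorm_weightedHardy_le hωm hω hp.le hgm.measurable
    (volume : Measure (EuclideanSpace ℝ (Fin n)))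
  rw [finrank_euclideanSpace_fin] at hbound
  change eLpNorm (weightedHardy ω f) _ _ ≤ _
  rwa [eLpNorm_congr_ae (weightedHardy_congr_ae volume hfg ω), eLpNorm_congr_ae hfg,
    hA_lintegral]
end

section
/- For 1 < p < ∞, the classical Hardy operator H f(x) = (1/x)∫₀ˣ f(t) dt satisfies ‖Hf‖_{L^p(ℝ)} ≤ (p/(p-1)) ‖f‖_{L^p(ℝ)} for all f ∈ L^p(ℝ), and the constant p/(p-1) is the best possible. -/
/-!
With `q = p/(p-1)` and `H f x = ∫₀¹ f (t x) dt`, Hölder's inequality against the weight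
`t ^ (-1/p)`, whose `L^q` norm on `(0, 1)` is `q ^ (1/q)`, gives
`|H f x| ^ p ≤ q ^ (p-1) ∫₀¹ t ^ (1/q) |f (t x)| ^ p dt`. Integrating in `x` (Tonelli) and using
`∫ |f (t x)| ^ p dx = t⁻¹ ‖f‖_p ^ p` leaves `∫₀¹ t ^ (1/q - 1) dt = q`, so `‖H f‖_p ≤ q ‖f‖_p`.
For sharpness, `f = x ^ a 1_{(0,1)}` with `a ↓ -1/p` is in `L^p` and satisfies `H f = f / (a+1)`
on `(0, 1)`, while `1/(a+1) → q`.
-/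

open MeasureTheory Set Filter
open scoped ENNReal Topology

section Hardy

theorem lintegral_Ioo_ofReal_rpow {r : ℝ} (hr : -1 < r) :
    ∫⁻ t in Ioo (0:ℝ) 1, ENNReal.ofReal (t ^ r) = ENNReal.ofReal (1 / (r + 1)) := by
  have hint : IntegrableOn (fun t : ℝ => t ^ r) (Ioo 0 1) := by
    rw [← integrableOn_Ioc_iff_integrableOn_Ioo,
      ← intervalIntegrable_iff_integrableOn_Ioc_of_le zero_le_one]
    exact intervalIntegral.intervalIntegrable_rpow' hr
  rw [← ofReal_integral_eq_lintegral_ofReal hint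
    (ae_restrict_of_forall_mem measurableSet_Ioo fun t ht => Real.rpow_nonneg ht.1.le r),
    ← integral_Ioc_eq_integral_Ioo, ← intervalIntegral.integral_of_le zero_le_one,
    integral_rpow (Or.inl hr), Real.one_rpow, Real.zero_rpow (by linarith), sub_zero, one_div]

theorem lintegral_comp_mul_left_of_pos {t : ℝ} (ht : 0 < t) {g : ℝ → ℝ≥0∞} (hg : Measurable g) :
    ∫⁻ x, g (t * x) = ENNReal.ofReal t⁻¹ * ∫⁻ y, g y := by
  rw [← lintegral_map hg (measurable_const_mul t), Real.map_volume_mul_left ht.ne',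
    lintegral_smul_measure, abs_of_pos (inv_pos.mpr ht), smul_eq_mul]

variable {p q : ℝ}

theorem rpow_setLIntegral_Ioo_le_weighted (hpq : p.HolderConjugate q) {g : ℝ → ℝ≥0∞}
    (hg : AEMeasurable g (volume.restrict (Ioo 0 1))) :
    (∫⁻ t in Ioo (0:ℝ) 1, g t) ^ p
      ≤ ENNReal.ofReal q ^ (p - 1)
        * ∫⁻ t in Ioo (0:ℝ) 1, ENNReal.ofReal (t ^ (1 / q)) * g t ^ p := by
  set s : ℝ := 1 / (p * q)
  have hp := hpq.pos
  have hq := hpq.symm.pos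
  have hsplit : ∫⁻ t in Ioo (0:ℝ) 1, g t = ∫⁻ t in Ioo (0:ℝ) 1,
      ((fun t => ENNReal.ofReal (t ^ s) * g t) * fun t => ENNReal.ofReal (t ^ (-s))) t := by
    refine setLIntegral_congr_fun measurableSet_Ioo fun t ht => ?_
    rw [Pi.mul_apply, mul_right_comm, ← ENNReal.ofReal_mul (Real.rpow_nonneg ht.1.le _),
      ← Real.rpow_add ht.1, add_neg_cancel, Real.rpow_zero, ENNReal.ofReal_one, one_mul]
  have hweight : ∫⁻ t in Ioo (0:ℝ) 1, ENNReal.ofReal (t ^ (-s)) ^ q = ENNReal.ofReal q := by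
    have hsq : -s * q = 1 / q - 1 := by
      simp only [s]
      field_simp
      linarith [hpq.mul_eq_add]
    rw [setLIntegral_congr_fun measurableSet_Ioo fun t ht => by
      rw [ENNReal.ofReal_rpow_of_pos (Real.rpow_pos_of_pos ht.1 _), ← Real.rpow_mul ht.1.le,
        hsq],
      lintegral_Ioo_ofReal_rpow (by linarith [one_div_pos.mpr hq]), sub_add_cancel, one_div_one_div]
  have hgp : ∫⁻ t in Ioo (0:ℝ) 1, (ENNReal.ofReal (t ^ s) * g t) ^ p
      = ∫⁻ t in Ioo (0:ℝ) 1, ENNReal.ofReal (t ^ (1 / q)) * g t ^ p := by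
    refine setLIntegral_congr_fun measurableSet_Ioo fun t ht => ?_
    rw [ENNReal.mul_rpow_of_nonneg _ _ hp.le,
      ENNReal.ofReal_rpow_of_pos (Real.rpow_pos_of_pos ht.1 _), ← Real.rpow_mul ht.1.le]
    congr 3
    simp only [s]
    field_simp
  calc (∫⁻ t in Ioo (0:ℝ) 1, g t) ^ p
      ≤ ((∫⁻ t in Ioo (0:ℝ) 1, ENNReal.ofReal (t ^ (1 / q)) * g t ^ p) ^ (1 / p)
          * ENNReal.ofReal q ^ (1 / q)) ^ p := by
        rw [hsplit, ← hgp, ← hweight]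
        gcongr
        exact ENNReal.lintegral_mul_le_Lp_mul_Lq _ hpq (by fun_prop) (by fun_prop)
    _ = _ := by
        rw [ENNReal.mul_rpow_of_nonneg _ _ hp.le, ← ENNReal.rpow_mul, ← ENNReal.rpow_mul,
          one_div_mul_cancel hp.ne', ENNReal.rpow_one, mul_comm, one_div_mul_eq_div,
          hpq.div_conj_eq_sub_one]

theorem lintegral_lintegral_Ioo_comp_mul {w G : ℝ → ℝ≥0∞} (hw : Measurable w)
    (hG : Measurable G) :
    ∫⁻ x, ∫⁻ t in Ioo (0:ℝ) 1, w t * G (t * x)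
      = (∫⁻ t in Ioo (0:ℝ) 1, w t * ENNReal.ofReal t⁻¹) * ∫⁻ y, G y := by
  rw [lintegral_lintegral_swap (by fun_prop), ← lintegral_mul_const _ (by fun_prop)]
  refine setLIntegral_congr_fun measurableSet_Ioo fun t ht => ?_
  rw [lintegral_const_mul _ (by fun_prop), lintegral_comp_mul_left_of_pos ht.1 hG, mul_assoc]

theorem lintegral_rpow_lintegral_Ioo_comp_mul_le (hpq : p.HolderConjugate q) {g : ℝ → ℝ≥0∞}
    (hg : Measurable g) :
    ∫⁻ x, (∫⁻ t in Ioo (0:ℝ) 1, g (t * x)) ^ p ≤ ENNReal.ofReal q ^ p * ∫⁻ y, g y ^ p := by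
  have hq := hpq.symm.pos
  have hweight : ∫⁻ t in Ioo (0:ℝ) 1, ENNReal.ofReal (t ^ (1 / q)) * ENNReal.ofReal t⁻¹
      = ENNReal.ofReal q := by
    rw [setLIntegral_congr_fun measurableSet_Ioo fun t ht => by
      rw [← ENNReal.ofReal_mul (Real.rpow_nonneg ht.1.le _), ← div_eq_mul_inv,
        ← Real.rpow_sub_one ht.1.ne'],
      lintegral_Ioo_ofReal_rpow (by linarith [one_div_pos.mpr hq]), sub_add_cancel,
      one_div_one_div]
  calc ∫⁻ x, (∫⁻ t in Ioo (0:ℝ) 1, g (t * x)) ^ p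
      ≤ ∫⁻ x, ENNReal.ofReal q ^ (p - 1)
          * ∫⁻ t in Ioo (0:ℝ) 1, ENNReal.ofReal (t ^ (1 / q)) * g (t * x) ^ p :=
        lintegral_mono fun x => rpow_setLIntegral_Ioo_le_weighted hpq (by fun_prop)
    _ = ENNReal.ofReal q ^ (p - 1) * (ENNReal.ofReal q * ∫⁻ y, g y ^ p) := by
        rw [lintegral_const_mul' _ _ (by finiteness),
          lintegral_lintegral_Ioo_comp_mul (G := fun y => g y ^ p) (by fun_prop) (by fun_prop),
          hweight]
    _ = ENNReal.ofReal q ^ p * ∫⁻ y, g y ^ p := by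
        rw [← mul_assoc]
        congr 1
        conv_rhs => rw [← sub_add_cancel p 1,
          ENNReal.rpow_add _ _ (by simpa using hq) ENNReal.ofReal_ne_top, ENNReal.rpow_one]

noncomputable def hardyOperator {E : Type*} [NormedAddCommGroup E] [NormedSpace ℝ E]
    (f : ℝ → E) (x : ℝ) : E :=
  ∫ t in Ioo (0:ℝ) 1, f (t * x)

section HardyOperator

variable {E : Type*} [NormedAddCommGroup E] [NormedSpace ℝ E]

theorem quasiMeasurePreserving_mul_const_volume {x : ℝ} (hx : x ≠ 0) :
    Measure.QuasiMeasurePreserving (fun t : ℝ => t * x) volume volume :=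
  ⟨measurable_mul_const x, by
    rw [Real.map_volume_mul_right hx]
    exact Measure.smul_absolutelyContinuous⟩

theorem hardyOperator_ae_eq {f g : ℝ → E} (hfg : f =ᵐ[volume] g) :
    hardyOperator f =ᵐ[volume] hardyOperator g := by
  filter_upwards [Measure.ae_ne volume 0] with x hx
  exact integral_congr_ae <| ae_restrict_of_ae <|
    (quasiMeasurePreserving_mul_const_volume hx).ae_eq_comp hfg

theorem eLpNorm_hardyOperator_le (hpq : p.HolderConjugate q) {f : ℝ → E}
    (hf : AEStronglyMeasurable f) :
    eLpNorm (hardyOperator f) (ENNReal.ofReal p) volume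
      ≤ ENNReal.ofReal q * eLpNorm f (ENNReal.ofReal p) volume := by
  obtain ⟨f', hf', hff'⟩ := hf
  have hp := hpq.pos
  rw [eLpNorm_congr_ae (hardyOperator_ae_eq hff'), eLpNorm_congr_ae hff',
    eLpNorm_eq_lintegral_rpow_enorm_toReal (by simpa using hp) ENNReal.ofReal_ne_top,
    eLpNorm_eq_lintegral_rpow_enorm_toReal (by simpa using hp) ENNReal.ofReal_ne_top,
    ENNReal.toReal_ofReal hp.le]
  calc (∫⁻ x, ‖hardyOperator f' x‖ₑ ^ p) ^ (1 / p)
      ≤ (ENNReal.ofReal q ^ p * ∫⁻ y, ‖f' y‖ₑ ^ p) ^ (1 / p) := by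
        refine ENNReal.rpow_le_rpow ((lintegral_mono fun x => ?_).trans
          (lintegral_rpow_lintegral_Ioo_comp_mul_le hpq hf'.enorm)) (by positivity)
        gcongr
        exact enorm_integral_le_lintegral_enorm _
    _ = ENNReal.ofReal q * (∫⁻ y, ‖f' y‖ₑ ^ p) ^ (1 / p) := by
        rw [ENNReal.mul_rpow_of_nonneg _ _ (by positivity), ← ENNReal.rpow_mul,
          mul_one_div_cancel hp.ne', ENNReal.rpow_one]

end HardyOperator

noncomputable def indicatorIooRpow (a : ℝ) : ℝ → ℂ :=
  (Ioo (0:ℝ) 1).indicator fun x => ((x ^ a : ℝ) : ℂ)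

section IndicatorIooRpow

variable {a : ℝ}

theorem lintegral_enorm_indicatorIooRpow_rpow (hp : 0 < p) (hap : -1 < a * p) :
    ∫⁻ x, ‖indicatorIooRpow a x‖ₑ ^ p = ENNReal.ofReal (1 / (a * p + 1)) := by
  have hpow : (fun x => ‖indicatorIooRpow a x‖ₑ ^ p)
      = (Ioo (0:ℝ) 1).indicator fun x => ENNReal.ofReal (x ^ (a * p)) := by
    ext x
    by_cases hx : x ∈ Ioo (0:ℝ) 1
    · rw [indicatorIooRpow, indicator_of_mem hx, indicator_of_mem hx, ← ofReal_norm,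
        Complex.norm_real, Real.norm_of_nonneg (Real.rpow_nonneg hx.1.le a),
        ENNReal.ofReal_rpow_of_pos (Real.rpow_pos_of_pos hx.1 a), ← Real.rpow_mul hx.1.le]
    · simp [indicatorIooRpow, indicator_of_notMem hx, hp]
  rw [hpow, lintegral_indicator measurableSet_Ioo, lintegral_Ioo_ofReal_rpow hap]

theorem eLpNorm_indicatorIooRpow (hp : 0 < p) (hap : -1 < a * p) :
    eLpNorm (indicatorIooRpow a) (ENNReal.ofReal p) volume
      = ENNReal.ofReal (1 / (a * p + 1)) ^ (1 / p) := by
  rw [eLpNorm_eq_lintegral_rpow_enorm_toReal (by simpa using hp) ENNReal.ofReal_ne_top,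
    ENNReal.toReal_ofReal hp.le, lintegral_enorm_indicatorIooRpow_rpow hp hap]

theorem memLp_indicatorIooRpow (hp : 0 < p) (hap : -1 < a * p) :
    MemLp (indicatorIooRpow a) (ENNReal.ofReal p) volume := by
  refine ⟨Measurable.aestronglyMeasurable ?_, ?_⟩
  · exact (by fun_prop : Measurable fun x : ℝ => ((x ^ a : ℝ) : ℂ)).indicator measurableSet_Ioo
  · rw [eLpNorm_indicatorIooRpow hp hap]
    finiteness

theorem hardyOperator_indicatorIooRpow (ha : -1 < a) {x : ℝ} (hx : x ∈ Ioo (0:ℝ) 1) :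
    hardyOperator (indicatorIooRpow a) x = (a + 1)⁻¹ • indicatorIooRpow a x := by
  have hint : ∫ t in Ioo (0:ℝ) 1, t ^ a = (a + 1)⁻¹ := by
    rw [← integral_Ioc_eq_integral_Ioo, ← intervalIntegral.integral_of_le zero_le_one,
      integral_rpow (Or.inl ha), Real.one_rpow, Real.zero_rpow (by linarith), sub_zero, one_div]
  have hscale : EqOn (fun t => indicatorIooRpow a (t * x)) (fun t => ((x ^ a * t ^ a : ℝ) : ℂ))
      (Ioo 0 1) := fun t ht => by
    have htx : t * x ∈ Ioo (0:ℝ) 1 := ⟨mul_pos ht.1 hx.1, by nlinarith [ht.2, hx.1, hx.2]⟩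
    simp only [indicatorIooRpow]
    rw [indicator_of_mem htx, mul_comm t, Real.mul_rpow hx.1.le ht.1.le]
  rw [hardyOperator, setIntegral_congr_fun measurableSet_Ioo hscale, integral_complex_ofReal,
    integral_const_mul, hint, indicatorIooRpow, indicator_of_mem hx, Complex.real_smul,
    mul_comm]
  push_cast
  rfl

theorem ofReal_inv_add_one_mul_eLpNorm_le_eLpNorm_hardyOperator (ha : -1 < a) :
    ENNReal.ofReal (a + 1)⁻¹ * eLpNorm (indicatorIooRpow a) (ENNReal.ofReal p) volume
      ≤ eLpNorm (hardyOperator (indicatorIooRpow a)) (ENNReal.ofReal p) volume := by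
  have hpos : 0 < (a + 1)⁻¹ := inv_pos.mpr (by linarith)
  rw [← Real.enorm_of_nonneg hpos.le, ← eLpNorm_const_smul]
  refine eLpNorm_mono fun x => ?_
  by_cases hx : x ∈ Ioo (0:ℝ) 1
  · rw [Pi.smul_apply, hardyOperator_indicatorIooRpow ha hx]
  · simp [indicatorIooRpow, indicator_of_notMem hx]

theorem inv_add_one_le_of_eLpNorm_hardyOperator_le (hp : 0 < p) (ha : -1 < a)
    (hap : -1 < a * p) {c : ℝ}
    (hc : eLpNorm (hardyOperator (indicatorIooRpow a)) (ENNReal.ofReal p) volume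
      ≤ ENNReal.ofReal c * eLpNorm (indicatorIooRpow a) (ENNReal.ofReal p) volume) :
    (a + 1)⁻¹ ≤ c := by
  have hnorm_ne_zero : ENNReal.ofReal (1 / (a * p + 1)) ^ (1 / p) ≠ 0 :=
    (ENNReal.rpow_pos (ENNReal.ofReal_pos.2 (one_div_pos.2 (by linarith)))
      ENNReal.ofReal_ne_top).ne'
  have h := (ofReal_inv_add_one_mul_eLpNorm_le_eLpNorm_hardyOperator ha).trans hc
  rw [eLpNorm_indicatorIooRpow hp hap, ENNReal.mul_le_mul_iff_left hnorm_ne_zero (by finiteness),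
    ENNReal.ofReal_le_ofReal_iff'] at h
  exact h.resolve_right (not_le.2 (inv_pos.2 (by linarith)))

end IndicatorIooRpow

theorem div_sub_one_le_of_forall_inv_add_one_le (hp : 1 < p) {c : ℝ}
    (h : ∀ a, -p⁻¹ < a → (a + 1)⁻¹ ≤ c) : p / (p - 1) ≤ c := by
  have hlim : Tendsto (fun a : ℝ => (a + 1)⁻¹) (𝓝[>] (-p⁻¹)) (𝓝 (p / (p - 1))) := by
    have hne : -p⁻¹ + 1 ≠ 0 := by
      have : p⁻¹ < 1 := inv_lt_one_of_one_lt₀ hp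
      linarith
    have : p / (p - 1) = (-p⁻¹ + 1)⁻¹ := by
      field_simp
      ring
    rw [this]
    exact ((continuous_add_const 1).continuousAt.inv₀ hne).tendsto.mono_left nhdsWithin_le_nhds
  exact le_of_tendsto hlim (eventually_nhdsWithin_of_forall h)

end Hardy

/-- The classical Hardy inequality on `ℝ`: `‖Hf‖_{L^p} ≤ (p/(p-1))‖f‖_{L^p}` where
`Hf(x) = ∫₀¹ f(tx) dt`, and the constant `p/(p-1)` is best possible. -/
theorem classical_hardy_sharp (p : ℝ) (hp : 1 < p) :
    (∀ f : ℝ → ℂ, MemLp f (ENNReal.ofReal p) volume →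
      eLpNorm (fun x => ∫ t in Ioo (0:ℝ) 1, f (t * x)) (ENNReal.ofReal p) volume
        ≤ ENNReal.ofReal (p / (p - 1)) * eLpNorm f (ENNReal.ofReal p) volume) ∧
    (∀ c : ℝ, (∀ f : ℝ → ℂ, MemLp f (ENNReal.ofReal p) volume →
      eLpNorm (fun x => ∫ t in Ioo (0:ℝ) 1, f (t * x)) (ENNReal.ofReal p) volume
        ≤ ENNReal.ofReal c * eLpNorm f (ENNReal.ofReal p) volume) → p / (p - 1) ≤ c) := by
  have hp0 : 0 < p := by linarith
  refine ⟨fun f hf => eLpNorm_hardyOperator_le (.conjExponent hp) hf.1, fun c hc => ?_⟩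
  refine div_sub_one_le_of_forall_inv_add_one_le hp fun a ha => ?_
  have hap : -1 < a * p := by
    have := mul_lt_mul_of_pos_right ha hp0
    rwa [neg_mul, inv_mul_cancel₀ hp0.ne'] at this
  have ha : -1 < a := by
    have : p⁻¹ < 1 := inv_lt_one_of_one_lt₀ hp
    linarith
  exact inv_add_one_le_of_eLpNorm_hardyOperator_le hp0 ha hap
    (hc _ (memLp_indicatorIooRpow hp0 hap))
end

section
/- Let m ∈ ℕ, 1 < p, p₁, …, p_m < ∞ with 1/p = 1/p₁ + ⋯ + 1/p_m, and let ω : [0,1]^m → [0,∞) be integrable with A_m := ∫_{[0,1]^m} (∏ᵢ tᵢ^{-n/pᵢ}) ω(t₁,…,t_m) dt < ∞. Then for all fᵢ ∈ L^{pᵢ}(ℝⁿ), ‖H_ω^m(f₁,…,f_m)‖_{L^p(ℝⁿ)} ≤ A_m ∏ᵢ ‖fᵢ‖_{L^{pᵢ}(ℝⁿ)}. -/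
/-!
Bound the Hardy operator pointwise by `∫⁻ t, ‖ω t • ∏ i, fᵢ (tᵢ x)‖ₑ dt` and apply Minkowski's
integral inequality to move the `L^p` norm inside the `t`-integral. For fixed `t`, the generalised
Hölder inequality (`1/p = ∑ 1/pᵢ`) splits the norm of the product, and dilating by `tᵢ` multiplies
the `L^{pᵢ}` norm of `fᵢ` by `tᵢ^{-n/pᵢ}`; integrating these factors against `ω` gives `A_m`.
-/

open MeasureTheory Set
open scoped ENNReal

section Minkowski

open Function

variable {α β : Type*} [MeasurableSpace α] [MeasurableSpace β] {μ : Measure α}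
  {ν : Measure β}

theorem lintegral_le_of_forall_measurable_le_of_lintegral_ne_top [SigmaFinite μ]
    {f : α → ℝ≥0∞} (hf : AEMeasurable f μ) {C : ℝ≥0∞}
    (hC : ∀ g : α → ℝ≥0∞, Measurable g → g ≤ᵐ[μ] f → ∫⁻ x, g x ∂μ ≠ ∞ →
      ∫⁻ x, g x ∂μ ≤ C) :
    ∫⁻ x, f x ∂μ ≤ C := by
  obtain ⟨w, hw_pos, hw_meas, hw_int⟩ := exists_pos_lintegral_lt_of_sigmaFinite μ one_ne_zero
  -- `min f (N * w)` increases to `f` since `w > 0`, and has integral at most `N`.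
  set g : ℕ → α → ℝ≥0∞ := fun N x ↦ min (hf.mk f x) (N * w x)
  have hg_sup : ∀ x, ⨆ N, g N x = hf.mk f x := fun x ↦ by
    rw [← inf_iSup_eq, ← ENNReal.iSup_mul, ENNReal.iSup_natCast,
      ENNReal.top_mul (by simpa using (hw_pos x).ne'), inf_top_eq]
  have hg_mono : Monotone g := fun N M hNM x ↦
    min_le_min le_rfl (mul_le_mul_left (by exact_mod_cast hNM) _)
  have hg_meas : ∀ N, Measurable (g N) := fun N ↦
    hf.measurable_mk.min (measurable_const.mul hw_meas.coe_nnreal_ennreal)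
  rw [lintegral_congr_ae hf.ae_eq_mk, ← lintegral_congr (fun x ↦ hg_sup x),
    lintegral_iSup hg_meas hg_mono]
  refine iSup_le fun N ↦ hC _ (hg_meas N) ?_ ?_
  · filter_upwards [hf.ae_eq_mk] with x hx
    exact (min_le_left _ _).trans hx.ge
  · refine ne_top_of_le_ne_top ?_ (lintegral_mono fun x ↦ min_le_right _ _)
    rw [lintegral_const_mul _ hw_meas.coe_nnreal_ennreal]
    exact ENNReal.mul_ne_top (by simp) hw_int.ne_top

theorem lintegral_rpow_one_div_le_of_le_lintegral [SFinite μ] [SFinite ν] {p q : ℝ}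
    (hpq : p.HolderConjugate q) {F : β → α → ℝ≥0∞}
    (hF : AEMeasurable (uncurry F) (ν.prod μ)) {h : α → ℝ≥0∞} (hh : Measurable h)
    (hhF : h ≤ᵐ[μ] fun x ↦ ∫⁻ t, F t x ∂ν)
    (hh_fin : ∫⁻ x, h x ^ p ∂μ ≠ ∞) :
    (∫⁻ x, h x ^ p ∂μ) ^ (1 / p) ≤ ∫⁻ t, (∫⁻ x, F t x ^ p ∂μ) ^ (1 / p) ∂ν := by
  -- Test `∫⁻ t, F t` against `h ^ (p - 1)`, swap the integrals, apply Hölder for each `t`, and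
  -- cancel the factor `J ^ (1 / q)`, which is finite because `J` is.
  set J := ∫⁻ x, h x ^ p ∂μ
  set R := ∫⁻ t, (∫⁻ x, F t x ^ p ∂μ) ^ (1 / p) ∂ν
  have hp0 : 0 < p := hpq.pos
  have hq0 : 0 < q := hpq.symm.pos
  rcases eq_or_ne J 0 with hJ0 | hJ0
  · rw [hJ0, ENNReal.zero_rpow_of_pos (by positivity)]
    exact zero_le
  have hpow : ∀ x, h x ^ p = h x ^ (p - 1) * h x := fun x ↦ by
    conv_lhs => rw [← sub_add_cancel p 1]
    rw [ENNReal.rpow_add_of_nonneg _ _ (by linarith [hpq.lt]) zero_le_one, ENNReal.rpow_one]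
  have hconj : ∀ x, (h x ^ (p - 1)) ^ q = h x ^ p := fun x ↦ by
    rw [← ENNReal.rpow_mul, hpq.sub_one_mul_conj]
  have hswap : J ≤ ∫⁻ t, ∫⁻ x, h x ^ (p - 1) * F t x ∂μ ∂ν :=
    calc J ≤ ∫⁻ x, h x ^ (p - 1) * ∫⁻ t, F t x ∂ν ∂μ := by
          refine lintegral_mono_ae (hhF.mono fun x hx ↦ ?_)
          rw [hpow]
          gcongr
      _ ≤ ∫⁻ x, ∫⁻ t, h x ^ (p - 1) * F t x ∂ν ∂μ :=
          lintegral_mono fun x ↦ lintegral_const_mul_le _ _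
      _ = ∫⁻ t, ∫⁻ x, h x ^ (p - 1) * F t x ∂μ ∂ν :=
          lintegral_lintegral_swap (((hh.comp measurable_fst).pow_const _).aemeasurable.mul
            hF.prod_swap)
  have hholder : ∀ᵐ t ∂ν, ∫⁻ x, h x ^ (p - 1) * F t x ∂μ
      ≤ J ^ (1 / q) * (∫⁻ x, F t x ^ p ∂μ) ^ (1 / p) := by
    filter_upwards [hF.aestronglyMeasurable.prodMk_left] with t ht
    simpa only [hconj, Pi.mul_apply, uncurry_apply_pair] using
      ENNReal.lintegral_mul_le_Lp_mul_Lq μ hpq.symm (hh.pow_const (p - 1)).aemeasurable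
        ht.aemeasurable
  have hJq_ne_top : J ^ (1 / q) ≠ ∞ := ENNReal.rpow_ne_top_of_nonneg (by positivity) hh_fin
  have hJq_ne_zero : J ^ (1 / q) ≠ 0 := by
    simp [ENNReal.rpow_eq_zero_iff, hJ0, hh_fin, hq0]
  refine (ENNReal.mul_le_mul_iff_left hJq_ne_zero hJq_ne_top).1 ?_
  calc J ^ (1 / p) * J ^ (1 / q) = J := by
        rw [← ENNReal.rpow_add_of_nonneg _ _ (by positivity) (by positivity), one_div, one_div,
          hpq.inv_add_inv_eq_one, ENNReal.rpow_one]
    _ ≤ ∫⁻ t, J ^ (1 / q) * (∫⁻ x, F t x ^ p ∂μ) ^ (1 / p) ∂ν :=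
        hswap.trans (lintegral_mono_ae hholder)
    _ = R * J ^ (1 / q) := by rw [lintegral_const_mul' _ _ hJq_ne_top, mul_comm]

theorem eLpNorm_lintegral_le_lintegral_eLpNorm [SigmaFinite μ] [SFinite ν] {p : ℝ≥0∞}
    (hp : 1 ≤ p) (hp_top : p ≠ ∞) {F : β → α → ℝ≥0∞}
    (hF : AEMeasurable (uncurry F) (ν.prod μ)) :
    eLpNorm (fun x ↦ ∫⁻ t, F t x ∂ν) p μ ≤ ∫⁻ t, eLpNorm (F t) p μ ∂ν := by
  rcases hp.eq_or_lt with rfl | hp1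
  · simp only [eLpNorm_one_eq_lintegral_enorm, enorm_eq_self]
    exact (lintegral_lintegral_swap hF.prod_swap).le
  have hr : 1 < p.toReal := by
    simpa using ENNReal.toReal_strict_mono hp_top hp1
  have hr0 : 0 < p.toReal := one_pos.trans hr
  simp only [eLpNorm_eq_lintegral_rpow_enorm_toReal (one_pos.trans hp1).ne' hp_top, enorm_eq_self,
    one_div]
  rw [ENNReal.rpow_inv_le_iff hr0]
  refine lintegral_le_of_forall_measurable_le_of_lintegral_ne_top
    (hF.lintegral_prod_left'.pow_const _) fun g hg hgF hg_fin ↦ ?_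
  have hg_root : ∀ x, (g x ^ p.toReal⁻¹) ^ p.toReal = g x := fun x ↦ by
    rw [← ENNReal.rpow_mul, inv_mul_cancel₀ hr0.ne', ENNReal.rpow_one]
  rw [← ENNReal.rpow_inv_le_iff hr0]
  simpa only [hg_root, one_div] using lintegral_rpow_one_div_le_of_le_lintegral
    (Real.HolderConjugate.conjExponent hr) hF (hg.pow_const p.toReal⁻¹)
    (hgF.mono fun x hx ↦ (ENNReal.rpow_inv_le_iff hr0).2 hx)
    (by simpa only [hg_root] using hg_fin)

end Minkowski

section Holder

open Finset

variable {ι α 𝕜 : Type*} [MeasurableSpace α] [NormedCommRing 𝕜] [NormOneClass 𝕜]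
  {μ : Measure α} {f : ι → α → 𝕜} {p : ι → ℝ≥0∞}

theorem eLpNorm_prod_le (s : Finset ι) (hf : ∀ i ∈ s, AEStronglyMeasurable (f i) μ) :
    eLpNorm (fun x ↦ ∏ i ∈ s, f i x) (∑ i ∈ s, (p i)⁻¹)⁻¹ μ
      ≤ ∏ i ∈ s, eLpNorm (f i) (p i) μ := by
  induction s using Finset.cons_induction with
  | empty =>
    simpa using eLpNormEssSup_le_of_ae_enorm_bound (μ := μ) (f := fun _ ↦ (1 : 𝕜))
      (ae_of_all _ fun _ ↦ by simp)
  | cons i s _ ih =>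
    simp only [prod_cons, sum_cons]
    have hs := forall_of_forall_cons hf
    calc _ ≤ eLpNorm (f i) (p i) μ
            * eLpNorm (fun x ↦ ∏ j ∈ s, f j x) (∑ j ∈ s, (p j)⁻¹)⁻¹ μ :=
          eLpNorm_smul_le_mul_eLpNorm (Finset.aestronglyMeasurable_fun_prod s hs)
            (hf i (mem_cons_self i s)) (hpqr := ⟨by simp⟩)
      _ ≤ _ := by gcongr; exact ih hs

end Holder

section Dilation

open Finset Module

variable {E : Type*} [NormedAddCommGroup E] [NormedSpace ℝ E] [MeasurableSpace E] [BorelSpace E]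
  [FiniteDimensional ℝ E] (μ : Measure E) [μ.IsAddHaarMeasure]

theorem eLpNorm_comp_smul {F : Type*} [NormedAddCommGroup F] {f : E → F}
    (hf : AEStronglyMeasurable f μ) {r : ℝ} (hr : r ≠ 0) {p : ℝ≥0∞} (hp : p ≠ ∞) :
    eLpNorm (fun x ↦ f (r • x)) p μ
      = ENNReal.ofReal (|r| ^ (-(finrank ℝ E : ℝ) / p.toReal)) * eLpNorm f p μ := by
  have hmap := Measure.map_addHaar_smul μ hr
  rw [← Function.comp_def, ← eLpNorm_map_measure (by rw [hmap]; exact hf.smul_measure _)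
      (measurable_const_smul r).aemeasurable, hmap, eLpNorm_smul_measure_of_ne_top hp, smul_eq_mul,
    ENNReal.ofReal_rpow_of_nonneg (abs_nonneg _) (by positivity), abs_inv, abs_pow,
    ← Real.rpow_natCast, ← Real.rpow_neg (abs_nonneg r), ← Real.rpow_mul (abs_nonneg r),
    one_div, ENNReal.toReal_inv, neg_mul, ← div_eq_mul_inv, neg_div]

theorem eLpNorm_prod_comp_smul_le {ι 𝕜 : Type*} [NormedCommRing 𝕜] [NormOneClass 𝕜]
    (s : Finset ι) {f : ι → E → 𝕜} (hf : ∀ i ∈ s, AEStronglyMeasurable (f i) μ)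
    {c : ι → ℝ} (hc : ∀ i ∈ s, c i ≠ 0) {p : ι → ℝ≥0∞} (hp : ∀ i ∈ s, p i ≠ ∞) :
    eLpNorm (fun x ↦ ∏ i ∈ s, f i (c i • x)) (∑ i ∈ s, (p i)⁻¹)⁻¹ μ
      ≤ ∏ i ∈ s, ENNReal.ofReal (|c i| ^ (-(finrank ℝ E : ℝ) / (p i).toReal))
          * eLpNorm (f i) (p i) μ := by
  refine (eLpNorm_prod_le s fun i hi ↦ ?_).trans_eq (prod_congr rfl fun i hi ↦ ?_)
  · exact (hf i hi).comp_quasiMeasurePreserving (Measure.quasiMeasurePreserving_smul μ (hc i hi))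
  · exact eLpNorm_comp_smul μ (hf i hi) (hc i hi) (hp i hi)

theorem quasiMeasurePreserving_smul_prod_s4 {β : Type*} [MeasurableSpace β] {ν : Measure β}
    [SFinite ν] {c : β → ℝ} (hc : Measurable c) (hc0 : ∀ᵐ b ∂ν, c b ≠ 0) :
    Measure.QuasiMeasurePreserving (fun z : β × E ↦ c z.1 • z.2) (ν.prod μ) μ := by
  have hmeas : Measurable fun z : β × E ↦ c z.1 • z.2 :=
    (hc.comp measurable_fst).smul measurable_snd
  refine ⟨hmeas, Measure.AbsolutelyContinuous.mk fun s hs hμs ↦ ?_⟩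
  rw [Measure.map_apply hmeas hs, Measure.measure_prod_null (hmeas hs)]
  filter_upwards [hc0] with b hb
  rw [Pi.zero_apply]
  exact (Measure.addHaar_preimage_smul μ hb s).trans (by rw [hμs, mul_zero])

theorem aestronglyMeasurable_smul_prod_comp_smul {ι 𝕜 : Type*} [Fintype ι] [RCLike 𝕜]
    {ν : Measure (ι → ℝ)} [SFinite ν] (hν : ∀ᵐ t ∂ν, ∀ i, t i ≠ 0) {ω : (ι → ℝ) → ℝ}
    (hω : AEStronglyMeasurable ω ν) {f : ι → E → 𝕜}
    (hf : ∀ i, AEStronglyMeasurable (f i) μ) :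
    AEStronglyMeasurable (fun z : (ι → ℝ) × E ↦ ω z.1 • ∏ i, f i (z.1 i • z.2))
      (ν.prod μ) := by
  have hω' : AEStronglyMeasurable (fun z : (ι → ℝ) × E ↦ ω z.1) (ν.prod μ) :=
    hω.comp_quasiMeasurePreserving Measure.quasiMeasurePreserving_fst
  have hprod : AEStronglyMeasurable (fun z : (ι → ℝ) × E ↦ ∏ i, f i (z.1 i • z.2))
      (ν.prod μ) :=
    aestronglyMeasurable_fun_prod _ fun i _ ↦ (hf i).comp_quasiMeasurePreserving
      (quasiMeasurePreserving_smul_prod_s4 μ (measurable_pi_apply i) (hν.mono fun _ ht ↦ ht i))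
  exact hω'.smul hprod

theorem eLpNorm_integral_smul_prod_comp_smul_le {ι 𝕜 : Type*} [Fintype ι] [RCLike 𝕜]
    {ν : Measure (ι → ℝ)} [SFinite ν] (hν : ∀ᵐ t ∂ν, ∀ i, 0 < t i) {ω : (ι → ℝ) → ℝ}
    (hω : AEStronglyMeasurable ω ν) {f : ι → E → 𝕜}
    (hf : ∀ i, AEStronglyMeasurable (f i) μ) {p : ι → ℝ≥0∞} (hp : ∀ i, p i ≠ ∞)
    (hr : 1 ≤ (∑ i, (p i)⁻¹)⁻¹) (hr_top : (∑ i, (p i)⁻¹)⁻¹ ≠ ∞) :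
    eLpNorm (fun x ↦ ∫ t, ω t • ∏ i, f i (t i • x) ∂ν) (∑ i, (p i)⁻¹)⁻¹ μ
      ≤ (∫⁻ t, ‖ω t‖ₑ * ∏ i, ENNReal.ofReal (t i ^ (-(finrank ℝ E : ℝ) / (p i).toReal)) ∂ν)
        * ∏ i, eLpNorm (f i) (p i) μ := by
  set K : (ι → ℝ) → E → ℝ≥0∞ := fun t x ↦ ‖ω t • ∏ i, f i (t i • x)‖ₑ
  have hK : AEMeasurable (Function.uncurry K) (ν.prod μ) :=
    (aestronglyMeasurable_smul_prod_comp_smul μ (hν.mono fun _ ht i ↦ (ht i).ne') hω hf).enorm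
  have hK_bound : ∀ᵐ t ∂ν, eLpNorm (K t) (∑ i, (p i)⁻¹)⁻¹ μ ≤ ‖ω t‖ₑ * ∏ i,
      ENNReal.ofReal (t i ^ (-(finrank ℝ E : ℝ) / (p i).toReal)) * eLpNorm (f i) (p i) μ := by
    filter_upwards [hν] with t ht
    rw [eLpNorm_enorm]
    refine (eLpNorm_const_smul (ω t) (fun x ↦ ∏ i, f i (t i • x)) _ _).trans_le ?_
    gcongr
    simpa only [abs_of_pos (ht _)] using eLpNorm_prod_comp_smul_le μ univ (fun i _ ↦ hf i)
      (fun i _ ↦ (ht i).ne') (fun i _ ↦ hp i)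
  calc _ ≤ eLpNorm (fun x ↦ ∫⁻ t, K t x ∂ν) (∑ i, (p i)⁻¹)⁻¹ μ :=
        eLpNorm_mono_enorm fun x ↦
          (enorm_integral_le_lintegral_enorm _).trans_eq (enorm_eq_self _).symm
    _ ≤ ∫⁻ t, eLpNorm (K t) (∑ i, (p i)⁻¹)⁻¹ μ ∂ν :=
        eLpNorm_lintegral_le_lintegral_eLpNorm hr hr_top hK
    _ ≤ _ := lintegral_mono_ae hK_bound
    _ = _ := by
        simp only [prod_mul_distrib, ← mul_assoc]
        exact lintegral_mul_const'' _ (hω.enorm.mul (Finset.measurable_prod _ fun i _ ↦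
          ((measurable_pi_apply i).pow_const _).ennreal_ofReal).aemeasurable)

end Dilation

theorem ENNReal.sum_inv_ofReal {ι : Type*} (s : Finset ι) {a : ι → ℝ} (ha : ∀ i ∈ s, 0 < a i) :
    ∑ i ∈ s, (ENNReal.ofReal (a i))⁻¹ = ENNReal.ofReal (∑ i ∈ s, (a i)⁻¹) := by
  rw [ENNReal.ofReal_sum_of_nonneg fun i hi ↦ (inv_pos.2 (ha i hi)).le]
  exact Finset.sum_congr rfl fun i hi ↦ (ENNReal.ofReal_inv_of_pos (ha i hi)).symm

/-- Sufficiency in Theorem 2.1: the weighted multilinear Hardy operator is bounded from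
`L^{p₁} × ⋯ × L^{p_m}` to `L^p` with norm at most
`A_m = ∫_{(0,1)^m} (∏ᵢ tᵢ^{-n/pᵢ}) ω(t) dt`. -/
theorem weighted_multilinear_hardy_Lp_bound (m n : ℕ) (p : ℝ) (ps : Fin m → ℝ)
    (hp : 1 < p) (hps : ∀ i, 1 < ps i) (hsum : 1/p = ∑ i, 1/ps i)
    (ω : (Fin m → ℝ) → ℝ)
    (hωnn : ∀ t, 0 ≤ ω t)
    (hωint : IntegrableOn ω (Set.univ.pi fun _ => Icc (0:ℝ) 1))
    (hA : IntegrableOn (fun t => (∏ i, t i ^ (-(n:ℝ)/ps i)) * ω t)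
      (Set.univ.pi fun _ => Ioo (0:ℝ) 1))
    (f : Fin m → EuclideanSpace ℝ (Fin n) → ℂ)
    (hf : ∀ i, MemLp (f i) (ENNReal.ofReal (ps i)) volume) :
    eLpNorm (fun x => ∫ t in (Set.univ.pi fun _ => Ioo (0:ℝ) 1),
        ω t • ∏ i, f i (t i • x)) (ENNReal.ofReal p) volume
      ≤ ENNReal.ofReal (∫ t in (Set.univ.pi fun _ => Ioo (0:ℝ) 1),
            (∏ i, t i ^ (-(n:ℝ)/ps i)) * ω t) *
        ∏ i, eLpNorm (f i) (ENNReal.ofReal (ps i)) volume := by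
  set S : Set (Fin m → ℝ) := Set.univ.pi fun _ => Ioo 0 1
  have hS : MeasurableSet S := MeasurableSet.univ_pi fun _ ↦ measurableSet_Ioo
  have hS_pos : ∀ᵐ t ∂volume.restrict S, ∀ i, 0 < t i := by
    filter_upwards [ae_restrict_mem hS] with t ht i using (ht i (mem_univ i)).1
  have hps_pos : ∀ i, 0 < ps i := fun i ↦ one_pos.trans (hps i)
  have hexp : (∑ i, (ENNReal.ofReal (ps i))⁻¹)⁻¹ = ENNReal.ofReal p := by
    have hsum' : ∑ i, (ps i)⁻¹ = p⁻¹ := by simpa only [one_div] using hsum.symm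
    rw [ENNReal.sum_inv_ofReal _ fun i _ ↦ hps_pos i, hsum',
      ← ENNReal.ofReal_inv_of_pos (inv_pos.2 (one_pos.trans hp)), inv_inv]
  have hω : AEStronglyMeasurable ω (volume.restrict S) :=
    (hωint.mono_set (pi_mono fun _ _ ↦ Ioo_subset_Icc_self)).aestronglyMeasurable
  have hbound := eLpNorm_integral_smul_prod_comp_smul_le volume hS_pos hω (fun i ↦ (hf i).1)
    (fun _ ↦ ENNReal.ofReal_ne_top) (by rw [hexp]; simpa using hp.le) (by simp [hexp])
  rw [hexp] at hbound
  refine hbound.trans_eq (congrArg (· * _) ?_)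
  have hA_nonneg : ∀ᵐ t ∂volume.restrict S, 0 ≤ (∏ i, t i ^ (-(n:ℝ)/ps i)) * ω t :=
    hS_pos.mono fun t ht ↦
      mul_nonneg (Finset.prod_nonneg fun i _ ↦ Real.rpow_nonneg (ht i).le _) (hωnn t)
  rw [ofReal_integral_eq_lintegral_ofReal hA hA_nonneg]
  refine lintegral_congr_ae (hS_pos.mono fun t ht ↦ ?_)
  simp only [finrank_euclideanSpace_fin, ENNReal.toReal_ofReal (hps_pos _).le]
  rw [ENNReal.ofReal_mul (Finset.prod_nonneg fun i _ ↦ Real.rpow_nonneg (ht i).le _),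
    ENNReal.ofReal_prod_of_nonneg fun i _ ↦ Real.rpow_nonneg (ht i).le _,
    Real.enorm_eq_ofReal (hωnn t), mul_comm]
end

section
/- If λ < -1/p and 1 < p < ∞, then the central Morrey space Ḃ^{p,λ}(ℝⁿ) contains only the zero function (up to almost everywhere equality). -/
open MeasureTheory Set

/-! Since `λ p < -1`, the weight `|B(0,R)|^{-(1+λp)}` tends to `∞` with `R`, while
`∫_{B(0,R)} |f|^p` is nondecreasing in `R`. A bounded product therefore forces every
`∫_{B(0,R)} |f|^p` to vanish, and exhausting `ℝⁿ` by balls gives `f = 0` a.e. -/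

open Filter Metric Topology ENNReal

section Balls

variable {X : Type*} [PseudoMetricSpace X]

theorem Metric.iUnion_ball_real (x₀ : X) : ⋃ R : ℝ, ball x₀ R = univ :=
  iUnion_eq_univ_iff.2 fun x => ⟨dist x x₀ + 1, by simp⟩

variable [MeasurableSpace X] {μ : Measure X} {x₀ : X}

theorem tendsto_measure_ball_atTop (μ : Measure X) (x₀ : X) :
    Tendsto (fun R => μ (ball x₀ R)) atTop (𝓝 (μ univ)) := by
  simpa only [iUnion_ball_real, Function.comp_def] using
    tendsto_measure_iUnion_atTop (μ := μ) fun _ _ h => ball_subset_ball (x := x₀) h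

theorem lintegral_ball_eq_zero_of_measure_rpow_mul_le (huniv : μ univ = ∞) {α : ℝ} (hα : 0 < α)
    {g : X → ℝ≥0∞} {C : ℝ≥0∞} (hC : C ≠ ∞)
    (hbound : ∀ R > 0, μ (ball x₀ R) ^ α * ∫⁻ x in ball x₀ R, g x ∂μ ≤ C) (R : ℝ) :
    ∫⁻ x in ball x₀ R, g x ∂μ = 0 := by
  set I := ∫⁻ x in ball x₀ R, g x ∂μ
  have hvol : Tendsto (fun R' => μ (ball x₀ R') ^ α * I) atTop (𝓝 (∞ * I)) := by
    refine ENNReal.Tendsto.mul_const ?_ (Or.inl top_ne_zero)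
    exact (ENNReal.tendsto_rpow_at_top hα).comp (huniv ▸ tendsto_measure_ball_atTop μ x₀)
  have hle : ∞ * I ≤ C := by
    refine le_of_tendsto hvol ?_
    filter_upwards [eventually_gt_atTop (0 : ℝ), eventually_ge_atTop R] with R' hR'0 hRR'
    calc μ (ball x₀ R') ^ α * I ≤ μ (ball x₀ R') ^ α * ∫⁻ x in ball x₀ R', g x ∂μ := by
          gcongr 1; exact lintegral_mono_set (ball_subset_ball hRR')
      _ ≤ C := hbound R' hR'0
  by_contra hI
  exact hC (top_le_iff.1 (ENNReal.top_mul hI ▸ hle))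

theorem ae_eq_zero_of_lintegral_ball_eq_zero {g : X → ℝ≥0∞} (hg : AEMeasurable g μ)
    (h : ∀ R : ℝ, ∫⁻ x in ball x₀ R, g x ∂μ = 0) : g =ᵐ[μ] 0 := by
  rw [← Measure.restrict_univ (μ := μ), ← iUnion_ball_nat x₀, EventuallyEq, ae_restrict_iUnion_iff]
  exact fun n => (lintegral_eq_zero_iff' hg.restrict).1 (h n)

end Balls

/-- If `λ < -1/p`, then the central Morrey space `Ḃ^{p,λ}(ℝⁿ)` contains only the zero
function (up to a.e. equality). -/
theorem central_morrey_trivial (n : ℕ) (hn : 0 < n) (p lam : ℝ) (hp : 1 < p)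
    (hlam : lam < -1/p) (f : EuclideanSpace ℝ (Fin n) → ℂ) (hf : Measurable f)
    (hmorrey : (⨆ (R : ℝ) (_ : 0 < R),
        ((volume (Metric.ball (0 : EuclideanSpace ℝ (Fin n)) R)) ^ (-(1 + lam * p)) *
          ∫⁻ x in Metric.ball (0 : EuclideanSpace ℝ (Fin n)) R, ‖f x‖₊ ^ p) ^ (1/p)) < ⊤) :
    f =ᵐ[volume] 0 := by
  have hp0 : 0 < p := one_pos.trans hp
  have hα : 0 < -(1 + lam * p) := by
    have := (lt_div_iff₀ hp0).1 hlam
    linarith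
  have : Nontrivial (EuclideanSpace ℝ (Fin n)) :=
    Module.nontrivial_of_finrank_pos (R := ℝ) (by rwa [finrank_euclideanSpace_fin])
  have hball := lintegral_ball_eq_zero_of_measure_rpow_mul_le
    (measure_univ_of_isAddLeftInvariant _) hα (rpow_ne_top_of_nonneg hp0.le hmorrey.ne)
    fun R hR => (rpow_inv_le_iff hp0).1 (by rw [← one_div]; exact le_iSup₂_of_le R hR le_rfl)
  have hzero := ae_eq_zero_of_lintegral_ball_eq_zero (hf.enorm.pow_const p).aemeasurable hball
  filter_upwards [hzero] with x hx
  simpa [ENNReal.rpow_eq_zero_iff, hp0, hp0.not_gt] using hx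
end

section
/- For 0 < α < 1, define ω̃(s) := e^{s(1 - n/p)} s^{-1+α} for 0 < s ≤ 1, ω̃(s) := e^{s(1-n/p)} s^{-1-α} for s > 1, and ω̃(0) := 0, and set ω(t) := ω̃(log(1/t)) for 0 < t ≤ 1, ω(0) := 0 (where 1 < p < ∞ and n ≥ 1). Then A := ∫₀¹ t^{-n/p} ω(t) dt < ∞ while C := ∫₀¹ t^{-n/p} ω(t) log(2/t) dt = ∞. -/
/-!
Substituting `t = e^{-s}` turns `∫₀¹ t^{-n/p} ω(t) dt` into `∫₀^∞ ψ(s) ds` with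
`ψ(s) = s^{α-1}` on `(0, 1]` and `ψ(s) = s^{-1-α}` beyond, which converges at both ends.
The extra factor `log(2/t) = log 2 + s` makes the tail behave like `s^{-α}`, which is not
integrable at infinity since `α < 1`.
-/

open MeasureTheory Set Real

lemma image_exp_neg_Ioi (a : ℝ) : (fun s => exp (-s)) '' Ioi a = Ioo 0 (exp (-a)) := by
  ext t
  constructor
  · rintro ⟨s, hs, rfl⟩
    exact ⟨exp_pos _, exp_lt_exp.2 (neg_lt_neg hs)⟩
  · rintro ⟨ht0, ht⟩
    refine ⟨-log t, ?_, by simp [exp_log ht0]⟩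
    rw [mem_Ioi, lt_neg]
    simpa using log_lt_log ht0 ht

lemma integrableOn_Ioo_exp_neg_iff (g : ℝ → ℝ) (a : ℝ) :
    IntegrableOn g (Ioo 0 (exp (-a))) ↔
      IntegrableOn (fun s => exp (-s) * g (exp (-s))) (Ioi a) := by
  have hderiv : ∀ s ∈ Ioi a, HasDerivWithinAt (fun s => exp (-s)) (-exp (-s)) (Ioi a) s :=
    fun s _ => by simpa using ((hasDerivAt_neg s).exp).hasDerivWithinAt
  have hinj : InjOn (fun s => exp (-s)) (Ioi a) := (exp_injective.comp neg_injective).injOn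
  have := integrableOn_image_iff_integrableOn_abs_deriv_smul measurableSet_Ioi hderiv hinj g
  simpa only [image_exp_neg_Ioi, abs_neg, abs_of_pos (exp_pos _), smul_eq_mul] using this

/-- The profile `ψ(s) = e^{-s} (e^{-s})^{-n/p} ω(e^{-s})` of the weight in the variable
`s = log (1/t)`. -/
noncomputable def logProfile (α s : ℝ) : ℝ :=
  if s ≤ 1 then s ^ (-1 + α) else s ^ (-1 - α)

lemma integrableOn_Ioi_logProfile {α : ℝ} (hα : 0 < α) :
    IntegrableOn (logProfile α) (Ioi 0) := by
  rw [← Ioc_union_Ioi_eq_Ioi zero_le_one]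
  refine IntegrableOn.union ?_ ?_
  · have hint := intervalIntegral.intervalIntegrable_rpow' (a := 0) (b := 1)
      (r := -1 + α) (by linarith)
    rw [intervalIntegrable_iff_integrableOn_Ioc_of_le zero_le_one] at hint
    exact hint.congr_fun (fun s hs => by simp [logProfile, hs.2]) measurableSet_Ioc
  · exact ((integrableOn_Ioi_rpow_iff (s := -1 - α) zero_lt_one).2 (by linarith)).congr_fun
      (fun s hs => by simp [logProfile, not_le.2 (mem_Ioi.1 hs)]) measurableSet_Ioi

lemma not_integrableOn_Ioi_logProfile_mul_add {α : ℝ} (hα : α < 1) {c : ℝ} (hc : 0 ≤ c) :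
    ¬ IntegrableOn (fun s => logProfile α s * (c + s)) (Ioi 1) := by
  intro h
  suffices IntegrableOn (fun s : ℝ => s ^ (-α)) (Ioi 1) by
    rw [integrableOn_Ioi_rpow_iff zero_lt_one] at this
    linarith
  refine Integrable.mono' h (by fun_prop) ?_
  filter_upwards [ae_restrict_mem measurableSet_Ioi] with s hs
  have hs0 : 0 < s := zero_lt_one.trans hs
  calc ‖s ^ (-α)‖ = s ^ (-1 - α) * s := by
        rw [norm_of_nonneg (rpow_nonneg hs0.le _), ← rpow_add_one hs0.ne']
        ring_nf
    _ ≤ s ^ (-1 - α) * (c + s) := by gcongr; linarith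
    _ = logProfile α s * (c + s) := by rw [logProfile, if_neg (not_le.2 hs)]

/-- The weight `ω(t) = ω̃(log (1/t))`. -/
noncomputable def weight (n p α t : ℝ) : ℝ :=
  if log (1/t) = 0 then 0
  else if log (1/t) ≤ 1 then exp (log (1/t) * (1 - n/p)) * log (1/t) ^ (-1 + α)
  else exp (log (1/t) * (1 - n/p)) * log (1/t) ^ (-1 - α)

lemma exp_neg_mul_rpow_mul_weight (n p α : ℝ) {s : ℝ} (hs : 0 < s) :
    exp (-s) * (exp (-s) ^ (-n/p) * weight n p α (exp (-s))) = logProfile α s := by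
  have hlog : log (1 / exp (-s)) = s := by rw [one_div, ← exp_neg, log_exp, neg_neg]
  have hexp : exp (-s) * exp (-s) ^ (-n/p) * exp (s * (1 - n/p)) = 1 := by
    rw [← exp_mul, ← exp_add, ← exp_add, exp_eq_one_iff]
    ring
  rw [weight, logProfile, hlog, if_neg hs.ne']
  split_ifs <;> rw [← mul_assoc, ← mul_assoc, hexp, one_mul]

theorem counterexample_A_finite_C_infinite_general (n : ℕ) (p α : ℝ)
    (hα0 : 0 < α) (hα1 : α < 1) :
    IntegrableOn
      (fun t : ℝ => t ^ (-(n:ℝ)/p) *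
        (if Real.log (1/t) = 0 then 0
         else if Real.log (1/t) ≤ 1 then
           Real.exp (Real.log (1/t) * (1 - (n:ℝ)/p)) * Real.log (1/t) ^ (-1 + α)
         else Real.exp (Real.log (1/t) * (1 - (n:ℝ)/p)) * Real.log (1/t) ^ (-1 - α)))
      (Ioo 0 1) ∧
    ¬ IntegrableOn
      (fun t : ℝ => t ^ (-(n:ℝ)/p) *
        (if Real.log (1/t) = 0 then 0
         else if Real.log (1/t) ≤ 1 then
           Real.exp (Real.log (1/t) * (1 - (n:ℝ)/p)) * Real.log (1/t) ^ (-1 + α)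
         else Real.exp (Real.log (1/t) * (1 - (n:ℝ)/p)) * Real.log (1/t) ^ (-1 - α)) *
        Real.log (2/t))
      (Ioo 0 1) := by
  change IntegrableOn (fun t => t ^ (-(n:ℝ)/p) * weight n p α t) _ ∧
    ¬ IntegrableOn (fun t => t ^ (-(n:ℝ)/p) * weight n p α t * log (2/t)) _
  rw [show Ioo (0 : ℝ) 1 = Ioo 0 (exp (-0)) by simp, integrableOn_Ioo_exp_neg_iff,
    integrableOn_Ioo_exp_neg_iff]
  refine ⟨(integrableOn_Ioi_logProfile hα0).congr_fun
    (fun s hs => (exp_neg_mul_rpow_mul_weight n p α hs).symm) measurableSet_Ioi, fun hC => ?_⟩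
  refine not_integrableOn_Ioi_logProfile_mul_add hα1 (log_nonneg one_le_two)
    ((hC.mono_set (Ioi_subset_Ioi zero_le_one)).congr_fun (fun s hs => ?_) measurableSet_Ioi)
  have hs0 : (0 : ℝ) < s := zero_lt_one.trans hs
  dsimp only
  rw [← exp_neg_mul_rpow_mul_weight n p α hs0, log_div two_ne_zero (exp_ne_zero _), log_exp]
  ring

/-- The example (1.5): with `ω̃(s) = e^{s(1-n/p)} s^{-1+α}` for `0 < s ≤ 1`,
`ω̃(s) = e^{s(1-n/p)} s^{-1-α}` for `s > 1`, `ω̃(0) = 0`, and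
`ω(t) = ω̃(log(1/t))`, one has `A = ∫₀¹ t^{-n/p} ω(t) dt < ∞` while
`C = ∫₀¹ t^{-n/p} ω(t) log(2/t) dt = ∞`. -/
theorem counterexample_A_finite_C_infinite (n : ℕ) (hn : 1 ≤ n) (p α : ℝ)
    (hp : 1 < p) (hα0 : 0 < α) (hα1 : α < 1) :
    IntegrableOn
      (fun t : ℝ => t ^ (-(n:ℝ)/p) *
        (if Real.log (1/t) = 0 then 0
         else if Real.log (1/t) ≤ 1 then
           Real.exp (Real.log (1/t) * (1 - (n:ℝ)/p)) * Real.log (1/t) ^ (-1 + α)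
         else Real.exp (Real.log (1/t) * (1 - (n:ℝ)/p)) * Real.log (1/t) ^ (-1 - α)))
      (Ioo 0 1) ∧
    ¬ IntegrableOn
      (fun t : ℝ => t ^ (-(n:ℝ)/p) *
        (if Real.log (1/t) = 0 then 0
         else if Real.log (1/t) ≤ 1 then
           Real.exp (Real.log (1/t) * (1 - (n:ℝ)/p)) * Real.log (1/t) ^ (-1 + α)
         else Real.exp (Real.log (1/t) * (1 - (n:ℝ)/p)) * Real.log (1/t) ^ (-1 - α)) *
        Real.log (2/t))
      (Ioo 0 1) :=
  counterexample_A_finite_C_infinite_general n p α hα0 hα1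
end
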